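/- arXiv:0812.2820 — 4 statements merged into one kernel-verified Lean document; each statement's English description precedes it below -/
import Mathlib

section
/- For every n ≥ 1, every m with 0 ≤ m ≤ n, and every k with 0 ≤ k ≤ n, the number of Dyck paths of semilength n with exactly m flaws and exactly k peaks equals the number of Dyck paths of semilength n with exactly n−m flaws and exactly n−k peaks; that is, p_{n,m,k} = p_{n,n−m,n−k}. -/
/-- The height of a path (list of steps; `true` = up step `U`, `false` = down step `D`)
after all its steps: #U − #D. -/
def height (l : List Bool) : ℤ := (l.count true : ℤ) - (l.count false : ℤ)

/-- `l` is a Dyck path of semilength `n`: `2n` steps ending at height `0`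
(equivalently, exactly `n` up steps). It may go below the x-axis. -/
def IsDyck (n : ℕ) (l : List Bool) : Prop := l.length = 2 * n ∧ l.count true = n

/-- The number of flaws: up steps starting at negative height. -/
def flaws (l : List Bool) : ℕ :=
  ((Finset.range l.length).filter
    (fun i => l.getD i false = true ∧ height (l.take i) < 0)).card

/-- The number of peaks: positions where an up step is immediately followed by a down step. -/
def peaks (l : List Bool) : ℕ :=
  ((Finset.range (l.length - 1)).filter
    (fun i => l.getD i false = true ∧ l.getD (i + 1) false = false)).card

/-- The number of valleys: positions where a down step is immediately followed by an up step. -/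
def valleys (l : List Bool) : ℕ :=
  ((Finset.range (l.length - 1)).filter
    (fun i => l.getD i false = false ∧ l.getD (i + 1) false = true)).card

/-- The number of double ascents: positions of two consecutive up steps. -/
def dascents (l : List Bool) : ℕ :=
  ((Finset.range (l.length - 1)).filter
    (fun i => l.getD i false = true ∧ l.getD (i + 1) false = true)).card

/-- The number of double descents: positions of two consecutive down steps. -/
def ddescents (l : List Bool) : ℕ :=
  ((Finset.range (l.length - 1)).filter
    (fun i => l.getD i false = false ∧ l.getD (i + 1) false = false)).card

/-- `p n m k`: the number of Dyck paths of semilength `n` with `m` flaws and `k` peaks. -/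
noncomputable def p (n m k : ℕ) : ℕ :=
  Nat.card {l : List Bool // IsDyck n l ∧ flaws l = m ∧ peaks l = k}

/-- `v n m k`: the number of Dyck paths of semilength `n` with `m` flaws and `k` valleys. -/
noncomputable def v (n m k : ℕ) : ℕ :=
  Nat.card {l : List Bool // IsDyck n l ∧ flaws l = m ∧ valleys l = k}

/-- `a n m k`: the number of Dyck paths of semilength `n` with `m` flaws and `k` double ascents. -/
noncomputable def a (n m k : ℕ) : ℕ :=
  Nat.card {l : List Bool // IsDyck n l ∧ flaws l = m ∧ dascents l = k}

/-- `d n m k`: the number of Dyck paths of semilength `n` with `m` flaws and `k` double descents. -/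
noncomputable def d (n m k : ℕ) : ℕ :=
  Nat.card {l : List Bool // IsDyck n l ∧ flaws l = m ∧ ddescents l = k}

/-!
Reflecting a path in the axis turns `m` flaws into `n - m` and peaks into valleys, so it suffices
to find a flaw-preserving involution of balanced paths that turns `v` valleys into `n - v` peaks.
On nonnegative Dyck paths, written `U B D C` by first return, flip `B` and `C` recursively and swap
them when one of them is empty: this involution turns `k` peaks into `n + 1 - k`, and since a
nonempty nonnegative path has one more peak than valleys, `v` valleys into `n - v` peaks. Cut a
balanced path into maximal blocks lying weakly above or weakly below the axis and apply this flip
to each block, conjugated by the reflection for blocks below. Every block keeps its side of the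
axis and its up steps, so flaws are preserved, and consecutive blocks meet with equal steps, so no
peak or valley sits at a junction.
-/

namespace DyckPath

theorem height_cons_true (t : List Bool) : height (true :: t) = height t + 1 := by
  simp [height]; ring

theorem height_cons_false (t : List Bool) : height (false :: t) = height t - 1 := by
  simp [height]; ring

theorem height_append (x y : List Bool) : height (x ++ y) = height x + height y := by
  simp [height]; ring

theorem count_true_map_not (l : List Bool) : (l.map not).count true = l.count false := by
  simpa using List.count_map_of_injective l not Bool.not_injective false

theorem count_false_map_not (l : List Bool) : (l.map not).count false = l.count true := by
  simpa using List.count_map_of_injective l not Bool.not_injective true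

theorem height_map_not (l : List Bool) : height (l.map not) = -height l := by
  simp only [height, count_true_map_not, count_false_map_not]; ring

theorem _root_.List.Perm.height_eq {l₁ l₂ : List Bool} (h : l₁.Perm l₂) :
    height l₁ = height l₂ := by
  simp only [height, h.count_eq]

theorem count_false_eq_count_true {l : List Bool} (h : height l = 0) :
    l.count false = l.count true := by
  unfold height at h; omega

def flawsFrom : ℤ → List Bool → ℕ
  | _, [] => 0
  | h, true :: t => (if h < 0 then 1 else 0) + flawsFrom (h + 1) t
  | h, false :: t => flawsFrom (h - 1) t

theorem card_filter_flaws_eq_flawsFrom (l : List Bool) (h : ℤ) :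
    ((Finset.range l.length).filter
      (fun i => l.getD i false = true ∧ h + height (l.take i) < 0)).card = flawsFrom h l := by
  induction l generalizing h with
  | nil => rfl
  | cons a t ih =>
    simp only [Finset.card_filter] at ih ⊢
    rw [List.length_cons, Finset.sum_range_succ']
    simp only [List.getD_cons_succ, List.getD_cons_zero, List.take_succ_cons, List.take_zero]
    cases a
    · have e (x : ℤ) : h + (x - 1) = h - 1 + x := by ring
      simp only [height_cons_false, e, ih, flawsFrom]
      simp
    · have e (x : ℤ) : h + (x + 1) = h + 1 + x := by ring
      simp only [height_cons_true, e, ih, flawsFrom]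
      simp [height, add_comm]

theorem flaws_eq_flawsFrom (l : List Bool) : flaws l = flawsFrom 0 l := by
  simpa [flaws] using card_filter_flaws_eq_flawsFrom l 0

theorem flawsFrom_append (x y : List Bool) (h : ℤ) :
    flawsFrom h (x ++ y) = flawsFrom h x + flawsFrom (h + height x) y := by
  induction x generalizing h with
  | nil => simp [flawsFrom, height]
  | cons a t ih =>
    cases a
    · simp only [List.cons_append, flawsFrom, ih, height_cons_false]; ring_nf
    · simp only [List.cons_append, flawsFrom, ih, height_cons_true]; ring_nf

/-- The up steps of the reflected path below the axis are the down steps of `l` above it, which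
match the up steps of `l` weakly above the axis level by level. -/
theorem flawsFrom_add_flawsFrom_map_not (l : List Bool) (h : ℤ) :
    flawsFrom h l + flawsFrom (-h) (l.map not) + max (h + height l) 0 =
      l.count true + max h 0 := by
  induction l generalizing h with
  | nil => simp [flawsFrom, height]
  | cons a t ih =>
    cases a
    · have := ih (h - 1)
      simp only [List.map_cons, Bool.not_false, flawsFrom, height_cons_false,
        List.count_cons_of_ne (by decide : false ≠ true)] at this ⊢
      rw [show -h + 1 = -(h - 1) by ring]; split_ifs <;> omega
    · have := ih (h + 1)
      simp only [List.map_cons, Bool.not_true, flawsFrom, height_cons_true,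
        List.count_cons_self] at this ⊢
      rw [show -h - 1 = -(h + 1) by ring]; push_cast; split_ifs <;> omega

theorem flawsFrom_add_flawsFrom_map_not_of_height_eq_zero {l : List Bool} (hl : height l = 0) :
    flawsFrom 0 l + flawsFrom 0 (l.map not) = l.count true := by
  have := flawsFrom_add_flawsFrom_map_not l 0
  simp only [hl, add_zero, max_self] at this
  exact_mod_cast this

def endLevel : ℕ → List Bool → Option ℕ
  | h, [] => some h
  | h, true :: t => endLevel (h + 1) t
  | 0, false :: _ => none
  | h + 1, false :: t => endLevel h t

theorem endLevel_append (x y : List Bool) (h : ℕ) :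
    endLevel h (x ++ y) = (endLevel h x).bind (endLevel · y) := by
  induction x generalizing h with
  | nil => rfl
  | cons a t ih => cases a <;> cases h <;> simp [endLevel, ih]

theorem endLevel_succ {x : List Bool} {h e : ℕ} (he : endLevel h x = some e) :
    endLevel (h + 1) x = some (e + 1) := by
  induction x generalizing h with
  | nil => simpa [endLevel] using he
  | cons a t ih => cases a <;> cases h <;> simp_all [endLevel]

theorem height_eq_of_endLevel {x : List Bool} {h e : ℕ} (he : endLevel h x = some e) :
    (e : ℤ) = h + height x := by
  induction x generalizing h with
  | nil => simp_all [endLevel, height]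
  | cons a t ih =>
    cases a <;> cases h <;> simp only [endLevel, reduceCtorEq] at he
    all_goals
      simp only [height_cons_true, height_cons_false, ih he]
      push_cast; ring

theorem flawsFrom_eq_zero_of_endLevel {x : List Bool} {h e : ℕ} (he : endLevel h x = some e) :
    flawsFrom h x = 0 := by
  induction x generalizing h with
  | nil => rfl
  | cons a t ih =>
    cases a <;> cases h <;> simp only [endLevel, reduceCtorEq] at he
    all_goals simpa [flawsFrom, add_nonneg] using ih he

def cut : ℕ → List Bool → List Bool × List Bool
  | _, [] => ([], [])
  | h, true :: t => (cut (h + 1) t).map (true :: ·) id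
  | 0, false :: t => ([], false :: t)
  | h + 1, false :: t => (cut h t).map (false :: ·) id

theorem cut_fst_append_cut_snd (h : ℕ) (l : List Bool) : (cut h l).1 ++ (cut h l).2 = l := by
  induction l generalizing h with
  | nil => rfl
  | cons a t ih => cases a <;> cases h <;> simp [cut, ih]

theorem exists_endLevel_cut (h : ℕ) (l : List Bool) : ∃ e, endLevel h (cut h l).1 = some e ∧
    ((cut h l).2 = [] ∨ e = 0 ∧ (cut h l).2.head? = some false) := by
  induction l generalizing h with
  | nil => exact ⟨h, rfl, .inl rfl⟩
  | cons a t ih =>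
    cases a <;> cases h
    · exact ⟨0, rfl, .inr ⟨rfl, rfl⟩⟩
    all_goals simpa [cut, endLevel] using ih _

theorem cut_append {x : List Bool} {h e : ℕ} (he : endLevel h x = some e) (r : List Bool) :
    cut h (x ++ r) = (cut e r).map (x ++ ·) id := by
  induction x generalizing h with
  | nil => cases he; rfl
  | cons a t ih =>
    cases a <;> cases h <;> simp only [endLevel, reduceCtorEq] at he
    all_goals simp [cut, ih he, Prod.map_map, Function.comp_def]

theorem cut_zero_of_head? {y : List Bool} (hy : y.head? ≠ some true) : cut 0 y = ([], y) := by
  match y, hy with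
  | [], _ => rfl
  | false :: _, _ => rfl

def IsNonnegDyck (l : List Bool) : Prop := endLevel 0 l = some 0

theorem IsNonnegDyck.height_eq_zero {l : List Bool} (hl : IsNonnegDyck l) : height l = 0 := by
  simpa using (height_eq_of_endLevel hl).symm

theorem isNonnegDyck_arch {B C : List Bool} (hB : IsNonnegDyck B) (hC : IsNonnegDyck C) :
    IsNonnegDyck (true :: (B ++ false :: C)) := by
  simpa [IsNonnegDyck, endLevel, endLevel_append, endLevel_succ hB] using hC

theorem IsNonnegDyck.exists_arch {l : List Bool} (hl : IsNonnegDyck l) (hne : l ≠ []) :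
    ∃ B C, IsNonnegDyck B ∧ IsNonnegDyck C ∧ l = true :: (B ++ false :: C) := by
  obtain _ | ⟨_ | _, t⟩ := l
  · exact absurd rfl hne
  · exact absurd hl (by simp [IsNonnegDyck, endLevel])
  obtain ⟨e, hB, hr⟩ := exists_endLevel_cut 0 t
  have ht : endLevel 1 ((cut 0 t).1 ++ (cut 0 t).2) = some 0 := by
    rwa [cut_fst_append_cut_snd]
  rw [endLevel_append, endLevel_succ hB] at ht
  rcases hr with hr | ⟨rfl, hr⟩
  · simp [hr, endLevel] at ht
  · obtain ⟨C, hC⟩ := List.head?_eq_some_iff.mp hr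
    refine ⟨_, C, hB, by simpa [IsNonnegDyck, hC, endLevel] using ht, ?_⟩
    rw [← hC, cut_fst_append_cut_snd]

@[elab_as_elim]
theorem IsNonnegDyck.induction {motive : (l : List Bool) → IsNonnegDyck l → Prop}
    (nil : motive [] rfl)
    (arch : ∀ B C (hB : IsNonnegDyck B) (hC : IsNonnegDyck C), motive B hB → motive C hC →
      motive (true :: (B ++ false :: C)) (isNonnegDyck_arch hB hC))
    {l : List Bool} (hl : IsNonnegDyck l) : motive l hl := by
  induction hlen : l.length using Nat.strong_induction_on generalizing l with
  | _ n ih =>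
    obtain rfl | hne := eq_or_ne l []
    · exact nil
    obtain ⟨B, C, hB, hC, rfl⟩ := hl.exists_arch hne
    simp only [List.length_cons, List.length_append] at hlen
    exact arch B C hB hC (ih _ (by omega) hB rfl) (ih _ (by omega) hC rfl)

theorem IsNonnegDyck.head? {l : List Bool} (hl : IsNonnegDyck l) (hne : l ≠ []) :
    l.head? = some true := by
  obtain ⟨B, C, -, -, rfl⟩ := hl.exists_arch hne
  rfl

theorem IsNonnegDyck.getLast? {l : List Bool} (hl : IsNonnegDyck l) (hne : l ≠ []) :
    l.getLast? = some false := by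
  induction hl using IsNonnegDyck.induction with
  | nil => exact absurd rfl hne
  | arch B C _ _ _ ihC =>
    rw [← List.cons_append, List.getLast?_append]
    obtain rfl | hC := eq_or_ne C []
    · simp
    · simp [List.getLast?_cons, ihC hC]

def pairCount (a b : Bool) : List Bool → ℕ
  | x :: y :: t => (if x = a ∧ y = b then 1 else 0) + pairCount a b (y :: t)
  | _ => 0

theorem pairCount_cons (a b c : Bool) (t : List Bool) :
    pairCount a b (c :: t) = (if c = a ∧ t.head? = some b then 1 else 0) + pairCount a b t := by
  cases t <;> simp [pairCount]

theorem card_filter_eq_pairCount (a b : Bool) (l : List Bool) :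
    ((Finset.range (l.length - 1)).filter
      (fun i => l.getD i false = a ∧ l.getD (i + 1) false = b)).card = pairCount a b l := by
  induction l with
  | nil => rfl
  | cons c t ih =>
    cases t with
    | nil => rfl
    | cons d t =>
      rw [pairCount, ← ih, Finset.card_filter, Finset.card_filter]
      simp only [List.length_cons, Nat.add_sub_cancel, Finset.sum_range_succ' _ (t.length),
        List.getD_cons_succ, List.getD_cons_zero]
      omega

theorem peaks_eq_pairCount (l : List Bool) : peaks l = pairCount true false l :=
  card_filter_eq_pairCount true false l

theorem pairCount_append (a b : Bool) (x y : List Bool) :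
    pairCount a b (x ++ y) = pairCount a b x + pairCount a b y +
      (if x.getLast? = some a ∧ y.head? = some b then 1 else 0) := by
  induction x with
  | nil => simp [pairCount]
  | cons c t ih =>
    rw [List.cons_append, pairCount_cons, ih, pairCount_cons]
    cases t with
    | nil => cases y <;> simp [pairCount, add_comm]
    | cons d t => simp; omega

theorem pairCount_map_not (a b : Bool) (l : List Bool) :
    pairCount a b (l.map not) = pairCount (!a) (!b) l := by
  induction l with
  | nil => rfl
  | cons c t ih =>
    cases t with
    | nil => rfl
    | cons d t =>
      simp only [List.map_cons, pairCount] at ih ⊢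
      rw [ih]
      cases a <;> cases b <;> cases c <;> cases d <;> rfl

/-- Runs of `a` and of `!a` alternate. -/
theorem pairCount_add_ite_getLast? (a : Bool) (l : List Bool) :
    pairCount a (!a) l + (if l.getLast? = some a then 1 else 0) =
      pairCount (!a) a l + (if l.head? = some a then 1 else 0) := by
  induction l with
  | nil => rfl
  | cons c t ih =>
    cases t with
    | nil => simp [pairCount]
    | cons d t =>
      simp only [pairCount, List.getLast?_cons_cons, List.head?_cons] at ih ⊢
      cases a <;> cases c <;> cases d <;> simp at ih ⊢ <;> omega

theorem IsNonnegDyck.peaks_eq_valleys_add_one {l : List Bool} (hl : IsNonnegDyck l)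
    (hne : l ≠ []) : pairCount true false l = pairCount false true l + 1 := by
  simpa [hl.head? hne, hl.getLast? hne] using pairCount_add_ite_getLast? true l

theorem pairCount_arch {B : List Bool} (hB : IsNonnegDyck B) (C : List Bool) :
    pairCount true false (true :: (B ++ false :: C)) =
      pairCount true false B + pairCount true false C + (if B = [] then 1 else 0) := by
  rw [pairCount_cons, pairCount_append, pairCount_cons]
  obtain rfl | hne := eq_or_ne B []
  · simp [pairCount, add_comm]
  · simp [hB.head? hne, hB.getLast? hne, List.head?_append, hne]

def nonnegFlip : List Bool → List Bool
  | [] => []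
  | _ :: t =>
    let B := (cut 0 t).1
    let C := (cut 0 t).2.tail
    if B = [] ∨ C = [] then true :: (nonnegFlip C ++ false :: nonnegFlip B)
    else true :: (nonnegFlip B ++ false :: nonnegFlip C)
termination_by l => l.length
decreasing_by
  all_goals
    have := congrArg List.length (cut_fst_append_cut_snd 0 t)
    have := List.length_tail (l := (cut 0 t).2)
    simp only [List.length_append] at *
    simp only [List.length_cons]
    omega

theorem nonnegFlip_arch {B : List Bool} (hB : IsNonnegDyck B) (C : List Bool) :
    nonnegFlip (true :: (B ++ false :: C)) =
      if B = [] ∨ C = [] then true :: (nonnegFlip C ++ false :: nonnegFlip B)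
      else true :: (nonnegFlip B ++ false :: nonnegFlip C) := by
  rw [nonnegFlip, cut_append hB, cut_zero_of_head? (by simp)]
  simp

theorem IsNonnegDyck.nonnegFlip_perm {x : List Bool} (hx : IsNonnegDyck x) :
    (nonnegFlip x).Perm x := by
  induction hx using IsNonnegDyck.induction with
  | nil => simp [nonnegFlip]
  | arch B C hB _ ihB ihC =>
    rw [nonnegFlip_arch hB]
    split_ifs <;> refine List.Perm.cons _ ?_
    · exact (List.perm_middle.trans (((ihC.append ihB).trans List.perm_append_comm).cons _)).trans
        List.perm_middle.symm
    · exact (ihB.append (ihC.cons _))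

theorem nonnegFlip_eq_nil_iff {x : List Bool} (hx : IsNonnegDyck x) :
    nonnegFlip x = [] ↔ x = [] := by
  rw [← List.length_eq_zero_iff, hx.nonnegFlip_perm.length_eq, List.length_eq_zero_iff]

theorem IsNonnegDyck.nonnegFlip {x : List Bool} (hx : IsNonnegDyck x) :
    IsNonnegDyck (nonnegFlip x) := by
  induction hx using IsNonnegDyck.induction with
  | nil => simp [DyckPath.nonnegFlip, IsNonnegDyck, endLevel]
  | arch B C hB _ ihB ihC =>
    rw [nonnegFlip_arch hB]
    split_ifs
    · exact isNonnegDyck_arch ihC ihB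
    · exact isNonnegDyck_arch ihB ihC

theorem nonnegFlip_nonnegFlip {x : List Bool} (hx : IsNonnegDyck x) :
    nonnegFlip (nonnegFlip x) = x := by
  induction hx using IsNonnegDyck.induction with
  | nil => simp [nonnegFlip]
  | arch B C hB hC ihB ihC =>
    rw [nonnegFlip_arch hB]
    split_ifs with h
    · rw [nonnegFlip_arch hC.nonnegFlip,
        if_pos (by simpa [nonnegFlip_eq_nil_iff, hB, hC, or_comm] using h), ihB, ihC]
    · rw [nonnegFlip_arch hB.nonnegFlip,
        if_neg (by simpa [nonnegFlip_eq_nil_iff, hB, hC] using h), ihB, ihC]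

theorem pairCount_nonnegFlip_add {x : List Bool} (hx : IsNonnegDyck x) :
    pairCount true false (nonnegFlip x) + pairCount true false x + (if x = [] then 1 else 0) =
      x.count true + 1 := by
  induction hx using IsNonnegDyck.induction with
  | nil => simp [nonnegFlip, pairCount]
  | arch B C hB hC ihB ihC =>
    rw [nonnegFlip_arch hB, pairCount_arch hB]
    obtain rfl | hB0 := eq_or_ne B [] <;> obtain rfl | hC0 := eq_or_ne C [] <;>
      simp_all [pairCount_arch hB.nonnegFlip, pairCount_arch hC.nonnegFlip,
        nonnegFlip_eq_nil_iff] <;> omega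

def blockFlip : List Bool → List Bool
  | [] => []
  | true :: t => nonnegFlip (cut 0 (true :: t)).1 ++ blockFlip (cut 0 (true :: t)).2
  | false :: t => (blockFlip (true :: t.map not)).map not
termination_by l => 2 * l.length + if l.head? = some false then 1 else 0
decreasing_by
  · have := congrArg List.length (cut_fst_append_cut_snd 1 t)
    simp only [cut, zero_add, Prod.map_snd, id, List.length_cons, List.length_append] at this ⊢
    split_ifs <;> omega
  · simp

theorem blockFlip_append {x y : List Bool} (hx : IsNonnegDyck x) (hne : x ≠ [])
    (hy : y.head? ≠ some true) : blockFlip (x ++ y) = nonnegFlip x ++ blockFlip y := by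
  obtain ⟨B, C, -, -, rfl⟩ := hx.exists_arch hne
  rw [List.cons_append, blockFlip, ← List.cons_append, cut_append hx, cut_zero_of_head? hy]
  simp

theorem blockFlip_map_not (l : List Bool) : blockFlip (l.map not) = (blockFlip l).map not := by
  match l with
  | [] => simp [blockFlip]
  | true :: t => simp [blockFlip, Function.comp_def]
  | false :: t => simp [blockFlip, Function.comp_def]

theorem exists_nonnegDyck_block {l : List Bool} (hl : l.head? = some true) (h0 : height l = 0) :
    ∃ x y, l = x ++ y ∧ IsNonnegDyck x ∧ x ≠ [] ∧ y.head? ≠ some true := by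
  obtain ⟨e, hx, hy⟩ := exists_endLevel_cut 0 l
  refine ⟨_, _, (cut_fst_append_cut_snd 0 l).symm, ?_, ?_, ?_⟩
  · rcases hy with hy | ⟨rfl, -⟩
    · have hxl : (cut 0 l).1 = l := by simpa [hy] using cut_fst_append_cut_snd 0 l
      obtain rfl : e = 0 := by
        have := height_eq_of_endLevel hx
        rw [hxl, h0] at this
        omega
      exact hx
    · exact hx
  · obtain _ | ⟨_ | _, t⟩ := l <;> simp_all [cut]
  · rcases hy with hy | ⟨-, hy⟩ <;> simp [hy]

theorem IsNonnegDyck.flawsFrom_eq_zero {x : List Bool} (hx : IsNonnegDyck x) :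
    flawsFrom 0 x = 0 := by
  simpa using flawsFrom_eq_zero_of_endLevel hx

@[elab_as_elim]
theorem induction_of_height_eq_zero {motive : List Bool → Prop} (nil : motive [])
    (block : ∀ x y, IsNonnegDyck x → x ≠ [] → y.head? ≠ some true → height y = 0 →
      motive y → motive (x ++ y))
    (map_not : ∀ l, l.head? = some true → height l = 0 → motive l → motive (l.map not))
    {l : List Bool} (hl : height l = 0) : motive l := by
  induction hlen : l.length using Nat.strong_induction_on generalizing l with
  | _ n ih =>
    have of_head_true {l} (hl : height l = 0) (hhead : l.head? = some true)
        (hlen : l.length = n) : motive l := by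
      obtain ⟨x, y, rfl, hx, hne, hy⟩ := exists_nonnegDyck_block hhead hl
      have hy0 : height y = 0 := by rwa [height_append, hx.height_eq_zero, zero_add] at hl
      have : x.length ≠ 0 := by simpa using hne
      exact block x y hx hne hy hy0 (ih _ (by simp at hlen; omega) hy0 rfl)
    match l, hl with
    | [], _ => exact nil
    | true :: t, hl => exact of_head_true hl rfl hlen
    | false :: t, hl =>
      have h' : height (true :: t.map not) = 0 := by
        simpa [hl] using height_map_not (false :: t)
      simpa [Function.comp_def] using
        map_not _ rfl h' (of_head_true h' rfl (by simpa using hlen))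

theorem blockFlip_perm {l : List Bool} (hl : height l = 0) : (blockFlip l).Perm l := by
  refine induction_of_height_eq_zero ?_ (fun x y hx hne hy _ ih => ?_) (fun l _ _ ih => ?_) hl
  · simp [blockFlip]
  · rw [blockFlip_append hx hne hy]; exact hx.nonnegFlip_perm.append ih
  · rw [blockFlip_map_not]; exact ih.map _

theorem head?_blockFlip {l : List Bool} (hl : height l = 0) : (blockFlip l).head? = l.head? := by
  refine induction_of_height_eq_zero ?_ (fun x y hx hne hy _ _ => ?_) (fun l _ _ ih => ?_) hl
  · simp [blockFlip]
  · have hne' : nonnegFlip x ≠ [] := by rwa [Ne, nonnegFlip_eq_nil_iff hx]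
    rw [blockFlip_append hx hne hy, List.head?_append_of_ne_nil _ hne',
      List.head?_append_of_ne_nil _ hne, hx.head? hne, hx.nonnegFlip.head? hne']
  · rw [blockFlip_map_not, List.head?_map, ih, List.head?_map]

theorem blockFlip_blockFlip {l : List Bool} (hl : height l = 0) : blockFlip (blockFlip l) = l := by
  refine induction_of_height_eq_zero ?_ (fun x y hx hne hy hy0 ih => ?_) (fun l _ _ ih => ?_) hl
  · simp [blockFlip]
  · have hne' : nonnegFlip x ≠ [] := by rwa [Ne, nonnegFlip_eq_nil_iff hx]
    rw [blockFlip_append hx hne hy,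
      blockFlip_append hx.nonnegFlip hne' (by rwa [head?_blockFlip hy0]), nonnegFlip_nonnegFlip hx,
      ih]
  · rw [blockFlip_map_not, blockFlip_map_not, ih]

theorem flawsFrom_blockFlip {l : List Bool} (hl : height l = 0) :
    flawsFrom 0 (blockFlip l) = flawsFrom 0 l := by
  refine induction_of_height_eq_zero ?_ (fun x y hx hne hy _ ih => ?_) (fun l _ hl ih => ?_) hl
  · simp [blockFlip]
  · rw [blockFlip_append hx hne hy, flawsFrom_append, flawsFrom_append, hx.height_eq_zero,
      hx.nonnegFlip.height_eq_zero, hx.flawsFrom_eq_zero, hx.nonnegFlip.flawsFrom_eq_zero,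
      add_zero, ih]
  · have hperm := blockFlip_perm hl
    have h₁ := flawsFrom_add_flawsFrom_map_not_of_height_eq_zero hl
    have h₂ := flawsFrom_add_flawsFrom_map_not_of_height_eq_zero (hperm.height_eq.trans hl)
    rw [blockFlip_map_not]
    rw [hperm.count_eq] at h₂
    omega

theorem pairCount_blockFlip_add {l : List Bool} (hl : height l = 0) :
    pairCount true false (blockFlip l) + pairCount false true l = l.count true ∧
      pairCount false true (blockFlip l) + pairCount true false l = l.count true := by
  refine induction_of_height_eq_zero ?_ (fun x y hx hne hy hy0 ih => ?_) (fun l _ hl ih => ?_) hl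
  · simp [blockFlip, pairCount]
  · have hne' : nonnegFlip x ≠ [] := by rwa [Ne, nonnegFlip_eq_nil_iff hx]
    have hflip := pairCount_nonnegFlip_add hx
    have hpx := hx.peaks_eq_valleys_add_one hne
    have hpx' := hx.nonnegFlip.peaks_eq_valleys_add_one hne'
    have hcount := hx.nonnegFlip_perm.count_eq true
    rw [if_neg hne, add_zero] at hflip
    rw [blockFlip_append hx hne hy]
    simp [pairCount_append, hx.getLast? hne, hx.nonnegFlip.getLast? hne', head?_blockFlip hy0, hy]
    omega
  · rw [blockFlip_map_not, pairCount_map_not, pairCount_map_not, pairCount_map_not,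
      pairCount_map_not, count_true_map_not, count_false_eq_count_true hl]
    exact ih.symm

def reciprocal (l : List Bool) : List Bool := (blockFlip l).map not

theorem reciprocal_reciprocal {l : List Bool} (hl : height l = 0) :
    reciprocal (reciprocal l) = l := by
  simp [reciprocal, blockFlip_map_not, blockFlip_blockFlip hl, Function.comp_def]

theorem _root_.IsDyck.height_eq_zero {n : ℕ} {l : List Bool} (hl : IsDyck n l) :
    height l = 0 := by
  have := List.count_true_add_count_false l
  simp only [height, IsDyck] at *
  omega

theorem _root_.IsDyck.reciprocal {n : ℕ} {l : List Bool} (hl : IsDyck n l) :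
    IsDyck n (reciprocal l) ∧ flaws (reciprocal l) + flaws l = n ∧
      peaks (reciprocal l) + peaks l = n := by
  have h0 := hl.height_eq_zero
  have hperm := blockFlip_perm h0
  have hcount : (blockFlip l).count false = n := by
    rw [hperm.count_eq, count_false_eq_count_true h0, hl.2]
  refine ⟨⟨?_, ?_⟩, ?_, ?_⟩
  · rw [DyckPath.reciprocal, List.length_map, hperm.length_eq, hl.1]
  · rw [DyckPath.reciprocal, count_true_map_not, hcount]
  · have hflaws := flawsFrom_add_flawsFrom_map_not_of_height_eq_zero (hperm.height_eq.trans h0)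
    rw [hperm.count_eq, hl.2, flawsFrom_blockFlip h0] at hflaws
    rw [DyckPath.reciprocal, flaws_eq_flawsFrom, flaws_eq_flawsFrom]
    omega
  · rw [DyckPath.reciprocal, peaks_eq_pairCount, peaks_eq_pairCount, pairCount_map_not,
      ← hl.2]
    exact (pairCount_blockFlip_add h0).2

end DyckPath

open DyckPath in
theorem peak_reciprocity_general (n m k : ℕ) (hm : m ≤ n) (hk : k ≤ n) :
    p n m k = p n (n - m) (n - k) := by
  have maps_to {m k : ℕ} {l : List Bool} (hl : IsDyck n l ∧ flaws l = m ∧ peaks l = k) :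
      IsDyck n (reciprocal l) ∧ flaws (reciprocal l) = n - m ∧ peaks (reciprocal l) = n - k := by
    obtain ⟨hD, rfl, rfl⟩ := hl
    obtain ⟨hD', hf, hp⟩ := hD.reciprocal
    exact ⟨hD', by omega, by omega⟩
  refine Nat.card_congr
    { toFun := fun l => ⟨reciprocal l, maps_to l.2⟩
      invFun := fun l => ⟨reciprocal l, by
        simpa only [Nat.sub_sub_self hm, Nat.sub_sub_self hk] using maps_to l.2⟩
      left_inv := fun l => Subtype.ext (reciprocal_reciprocal l.2.1.height_eq_zero)
      right_inv := fun l => Subtype.ext (reciprocal_reciprocal l.2.1.height_eq_zero) }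

/-- The reciprocity theorem for peaks: `p n m k = p n (n-m) (n-k)`. -/
theorem peak_reciprocity (n m k : ℕ) (hn : 1 ≤ n) (hm : m ≤ n) (hk : k ≤ n) :
    p n m k = p n (n - m) (n - k) :=
  peak_reciprocity_general n m k hm hk
end

section
/- For every n ≥ 1, every m with 0 ≤ m ≤ n, and every k with 0 ≤ k ≤ n, the number of Dyck paths of semilength n with exactly m flaws and exactly k valleys equals the number of Dyck paths of semilength n with exactly n−m flaws and exactly n−k valleys; that is, v_{n,m,k} = v_{n,n−m,n−k}. -/
/-!
Record a path by one bit per up step and one per down step: `upMarks` marks the up steps that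
follow a down step, `downMarks` the down steps that precede an up step. Both strings contain one
`true` per valley, the path is recovered from them (`ofMarks`), and every pair of strings with
equally many `true`s arises; for a Dyck path of semilength `n` both have length `n`.

The `i`-th up step (from `0`) lies in the up-run numbered `α₀ + ⋯ + αᵢ`, so the down steps before it
are those of the first `α₀ + ⋯ + αᵢ` down-runs; it is a flaw, i.e. more than `i` down steps precede
it, iff fewer than `α₀ + ⋯ + αᵢ` of `β₀, …, β_{i-1}` are `true`. Complementing both strings turns
`i - (β₀ + ⋯ + β_{i-1}) < i + 1 - (α₀ + ⋯ + αᵢ)` into the negation of that inequality, so it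
exchanges flaws with non-flawed up steps and `k` valleys with `n - k`, and it is an involution.
-/

lemma count_map_not (l : List Bool) : (l.map not).count true = l.count false :=
  List.count_map_of_injective l not Bool.not_injective false

lemma card_filter_range_succ (P : ℕ → Prop) [DecidablePred P] (m : ℕ) :
    ((Finset.range (m + 1)).filter P).card
      = ((Finset.range m).filter (fun i => P (i + 1))).card + if P 0 then 1 else 0 := by
  rw [Finset.card_filter, Finset.card_filter, Finset.sum_range_succ']

-- `p`: the previous step is an up step, or there is none.
def upMarks : Bool → List Bool → List Bool
  | _, [] => []
  | p, true :: t => (!p) :: upMarks true t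
  | _, false :: t => upMarks false t

def downMarks : List Bool → List Bool
  | [] => []
  | true :: t => downMarks t
  | false :: t => t.headI :: downMarks t

def ofMarks : List Bool → List Bool → List Bool
  | [], [] => []
  | [], _ :: β => false :: ofMarks [] β
  | false :: α, β => true :: ofMarks α β
  | true :: α, [] => false :: true :: ofMarks α [] -- unreachable for marks of equal weight
  | true :: α, false :: β => false :: ofMarks (true :: α) β
  | true :: α, true :: β => false :: true :: ofMarks α β

lemma length_upMarks (p : Bool) (l : List Bool) : (upMarks p l).length = l.count true := by
  induction l generalizing p with
  | nil => rfl
  | cons b t ih => cases b <;> simp [upMarks, ih]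

lemma length_downMarks (l : List Bool) : (downMarks l).length = l.count false := by
  induction l with
  | nil => rfl
  | cons b t ih => cases b <;> simp [downMarks, ih]

lemma count_upMarks (p : Bool) (l : List Bool) :
    (upMarks p l).count true
      = (downMarks l).count true + if p = false ∧ l.headI = true then 1 else 0 := by
  induction l generalizing p with
  | nil => simp [upMarks, downMarks]
  | cons b t ih =>
    cases b
    · cases h : t.headI <;> simp [upMarks, downMarks, ih, h]
    · cases p <;> simp [upMarks, downMarks, ih]

lemma valleys_cons_cons (b c : Bool) (t : List Bool) :
    valleys (b :: c :: t) = valleys (c :: t) + if b = false ∧ c = true then 1 else 0 := by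
  simp only [valleys, List.length_cons, Nat.add_sub_cancel, card_filter_range_succ,
    List.getD_cons_succ, List.getD_cons_zero]

lemma count_downMarks (l : List Bool) : (downMarks l).count true = valleys l := by
  induction l with
  | nil => rfl
  | cons b t ih =>
    rcases t with _ | ⟨c, t⟩
    · cases b <;> simp [downMarks, valleys]
    · cases b <;> cases c <;> simp_all [downMarks, valleys_cons_cons]

lemma upMarks_cons_false {l : List Bool} (h : l.head? ≠ some true) :
    upMarks true (false :: l) = upMarks true l := by
  rcases l with _ | ⟨_ | _, l⟩ <;> simp_all [upMarks]

lemma downMarks_cons_false {l : List Bool} (h : l.head? ≠ some true) :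
    downMarks (false :: l) = false :: downMarks l := by
  rcases l with _ | ⟨_ | _, l⟩ <;> simp_all [downMarks]

lemma head?_upMarks_false_ne (l : List Bool) : (upMarks false l).head? ≠ some false := by
  induction l with
  | nil => simp [upMarks]
  | cons b t ih => cases b <;> simp_all [upMarks]

lemma ofMarks_cons_false {α : List Bool} (h : α.head? ≠ some false) (β : List Bool) :
    ofMarks α (false :: β) = false :: ofMarks α β := by
  rcases α with _ | ⟨_ | _, α⟩ <;> simp_all [ofMarks]

lemma head?_ofMarks_ne {α : List Bool} (h : α.head? ≠ some false) (β : List Bool) :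
    (ofMarks α β).head? ≠ some true := by
  rcases α with _ | ⟨_ | _, α⟩ <;> rcases β with _ | ⟨_ | _, β⟩ <;> simp_all [ofMarks]

lemma ofMarks_marks (l : List Bool) : ofMarks (upMarks true l) (downMarks l) = l := by
  -- `D D ⋯` is decoded through its tail `D ⋯`, so both forms are carried through the induction.
  suffices ∀ l, ofMarks (upMarks true l) (downMarks l) = l ∧
      ofMarks (upMarks true (false :: l)) (downMarks (false :: l)) = false :: l from (this l).1
  intro l
  induction l with
  | nil => simp [upMarks, downMarks, ofMarks]
  | cons b t ih =>
    cases b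
    · refine ⟨ih.2, ?_⟩
      have := ofMarks_cons_false (head?_upMarks_false_ne t) (downMarks (false :: t))
      simp_all [upMarks, downMarks]
    · simp [upMarks, downMarks, ofMarks, ih.1]

lemma upMarks_ofMarks {α β : List Bool} (h : α.count true = β.count true) :
    upMarks true (ofMarks α β) = α := by
  induction α, β using ofMarks.induct with
  | case1 => simp [ofMarks, upMarks]
  | case2 b β ih =>
    obtain ⟨rfl, hβ⟩ : b = false ∧ β.count true = 0 := by cases b <;> simp_all
    rw [ofMarks, upMarks_cons_false (head?_ofMarks_ne (by simp) β), ih hβ.symm]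
  | case3 α β ih => simp_all [ofMarks, upMarks]
  | case4 α ih => simp at h
  | case5 α β ih =>
    rw [ofMarks, upMarks_cons_false (head?_ofMarks_ne (by simp) β)]
    exact ih (by simpa using h)
  | case6 α β ih => simp_all [ofMarks, upMarks]

lemma downMarks_ofMarks {α β : List Bool} (h : α.count true = β.count true) :
    downMarks (ofMarks α β) = β := by
  induction α, β using ofMarks.induct with
  | case1 => simp [ofMarks, downMarks]
  | case2 b β ih =>
    obtain ⟨rfl, hβ⟩ : b = false ∧ β.count true = 0 := by cases b <;> simp_all
    rw [ofMarks, downMarks_cons_false (head?_ofMarks_ne (by simp) β), ih hβ.symm]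
  | case3 α β ih => simp_all [ofMarks, downMarks]
  | case4 α ih => simp at h
  | case5 α β ih =>
    rw [ofMarks, downMarks_cons_false (head?_ofMarks_ne (by simp) β)]
    exact congrArg _ (ih (by simpa using h))
  | case6 α β ih => simp_all [ofMarks, downMarks]

def flawsFrom : ℤ → List Bool → ℕ
  | _, [] => 0
  | h, true :: t => flawsFrom (h + 1) t + if h < 0 then 1 else 0
  | h, false :: t => flawsFrom (h - 1) t

lemma height_cons (b : Bool) (t : List Bool) :
    height (b :: t) = (if b then 1 else -1) + height t := by
  cases b <;> simp [height] <;> ring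

lemma flawsFrom_eq_card (h : ℤ) (l : List Bool) :
    flawsFrom h l = ((Finset.range l.length).filter
      (fun i => l.getD i false = true ∧ h + height (l.take i) < 0)).card := by
  induction l generalizing h with
  | nil => rfl
  | cons b t ih =>
    have shift (i : ℕ) :
        ((b :: t).getD (i + 1) false = true ∧ h + height ((b :: t).take (i + 1)) < 0)
        ↔ (t.getD i false = true ∧ h + (if b then 1 else -1) + height (t.take i) < 0) := by
      rw [List.getD_cons_succ, List.take_succ_cons, height_cons, add_assoc]
    rw [List.length_cons, card_filter_range_succ]
    simp_rw [shift]
    cases b <;> simp [flawsFrom, ih, height, sub_eq_add_neg]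

lemma flaws_eq_flawsFrom (l : List Bool) : flaws l = flawsFrom 0 l := by
  simp [flaws, flawsFrom_eq_card]

-- The `i`-th up step of `ofMarks α β`, started at height `h`, is a flaw iff more than `h + i`
-- down steps precede it.
def flawsOfMarks (h : ℤ) (α β : List Bool) : ℕ :=
  ((Finset.range α.length).filter fun i : ℕ =>
    h + i < 0 ∨ (β.take (h + i).toNat).count true < (α.take (i + 1)).count true).card

lemma count_take_toNat_cons (b : Bool) (β : List Bool) (k : ℤ) :
    ((b :: β).take k.toNat).count true
      = if 0 < k then (β.take (k - 1).toNat).count true + b.toNat else 0 := by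
  by_cases hk : 0 < k
  · obtain ⟨n, hn⟩ : ∃ n, k.toNat = n + 1 := ⟨k.toNat - 1, by omega⟩
    rw [if_pos hk, hn, show (k - 1).toNat = n by omega]
    cases b <;> simp
  · rw [if_neg hk, show k.toNat = 0 by omega]
    simp

lemma flawsFrom_ofMarks {α β : List Bool} (hc : α.count true ≤ β.count true) (h : ℤ) :
    flawsFrom h (ofMarks α β) = flawsOfMarks h α β := by
  induction α, β using ofMarks.induct generalizing h with
  | case1 => simp [ofMarks, flawsFrom, flawsOfMarks]
  | case2 b β ih => simp [ofMarks, flawsFrom, flawsOfMarks, ih (Nat.zero_le _)]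
  | case3 α β ih =>
    rw [ofMarks, flawsFrom, ih (by simpa using hc), flawsOfMarks, flawsOfMarks, List.length_cons,
      card_filter_range_succ]
    congr 2
    · refine Finset.filter_congr fun i _ => ?_
      rw [List.take_succ_cons, List.count_cons, Nat.cast_succ, ← add_assoc, add_right_comm]
      simp
    · simp
  | case4 α ih => simp at hc
  | case5 α β ih =>
    rw [ofMarks, flawsFrom, ih (by simpa using hc), flawsOfMarks, flawsOfMarks]
    congr 1
    refine Finset.filter_congr fun i _ => ?_
    rw [count_take_toNat_cons, sub_add_eq_add_sub]
    simp only [List.take_succ_cons, List.count_cons_self, Bool.toNat_false]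
    split_ifs <;> omega
  | case6 α β ih =>
    rw [ofMarks, flawsFrom, flawsFrom, sub_add_cancel, ih (by simpa using hc), flawsOfMarks,
      flawsOfMarks, List.length_cons, card_filter_range_succ]
    congr 2
    · refine Finset.filter_congr fun i _ => ?_
      rw [count_take_toNat_cons, Nat.cast_succ, ← add_assoc, add_sub_cancel_right]
      simp only [List.take_succ_cons, List.count_cons_self, Bool.toNat_true]
      split_ifs <;> omega
    · rw [count_take_toNat_cons]
      simp only [List.take_succ_cons, List.count_cons_self, Bool.toNat_true]
      split_ifs <;> simp <;> omega

lemma flawsOfMarks_map_not {α β : List Bool} (hαβ : α.length ≤ β.length + 1) :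
    flawsOfMarks 0 (α.map not) (β.map not) = α.length - flawsOfMarks 0 α β := by
  have flip : ∀ i ∈ Finset.range α.length,
      ((0 : ℤ) + i < 0 ∨ ((β.map not).take (0 + i : ℤ).toNat).count true
          < ((α.map not).take (i + 1)).count true)
        ↔ ¬((0 : ℤ) + i < 0 ∨ (β.take (0 + i : ℤ).toNat).count true
          < (α.take (i + 1)).count true) := by
    intro i hi
    have hβ := (β.take i).count_true_add_count_false
    have hα := (α.take (i + 1)).count_true_add_count_false
    simp only [zero_add, Int.toNat_natCast, ← List.map_take, count_map_not,
      List.length_take] at hα hβ ⊢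
    rw [Finset.mem_range] at hi
    omega
  rw [flawsOfMarks, flawsOfMarks, List.length_map, Finset.filter_congr flip,
    Finset.filter_not, Finset.card_sdiff_of_subset (Finset.filter_subset _ _), Finset.card_range]

lemma flaws_eq_flawsOfMarks (l : List Bool) :
    flaws l = flawsOfMarks 0 (upMarks true l) (downMarks l) := by
  conv_lhs => rw [← ofMarks_marks l]
  rw [flaws_eq_flawsFrom, flawsFrom_ofMarks (by simp [count_upMarks])]

def valleyFlip (l : List Bool) : List Bool :=
  ofMarks ((upMarks true l).map not) ((downMarks l).map not)

section ValleyFlip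

variable {n : ℕ} {l : List Bool}

lemma IsDyck.count_false (hl : IsDyck n l) : l.count false = n := by
  have := l.count_true_add_count_false
  rw [hl.1, hl.2] at this
  omega

lemma IsDyck.length_upMarks (hl : IsDyck n l) : (upMarks true l).length = n := by
  rw [_root_.length_upMarks, hl.2]

lemma IsDyck.length_downMarks (hl : IsDyck n l) : (downMarks l).length = n := by
  rw [_root_.length_downMarks, hl.count_false]

lemma count_map_not_upMarks_eq_downMarks (hl : IsDyck n l) :
    ((upMarks true l).map not).count true = ((downMarks l).map not).count true := by
  have hα := (upMarks true l).count_true_add_count_false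
  have hβ := (downMarks l).count_true_add_count_false
  rw [count_map_not, count_map_not]
  simp only [count_upMarks, hl.length_upMarks, hl.length_downMarks] at hα hβ
  simp only [Bool.true_eq_false, false_and, if_false, add_zero] at hα
  omega

lemma upMarks_valleyFlip (hl : IsDyck n l) :
    upMarks true (valleyFlip l) = (upMarks true l).map not :=
  upMarks_ofMarks (count_map_not_upMarks_eq_downMarks hl)

lemma downMarks_valleyFlip (hl : IsDyck n l) :
    downMarks (valleyFlip l) = (downMarks l).map not :=
  downMarks_ofMarks (count_map_not_upMarks_eq_downMarks hl)

lemma valleyFlip_valleyFlip (hl : IsDyck n l) : valleyFlip (valleyFlip l) = l := by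
  rw [valleyFlip, upMarks_valleyFlip hl, downMarks_valleyFlip hl]
  simpa [Function.comp_def] using ofMarks_marks l

lemma isDyck_valleyFlip (hl : IsDyck n l) : IsDyck n (valleyFlip l) := by
  have hup := congrArg List.length (upMarks_valleyFlip hl)
  have hdown := congrArg List.length (downMarks_valleyFlip hl)
  rw [length_upMarks, List.length_map, hl.length_upMarks] at hup
  rw [length_downMarks, List.length_map, hl.length_downMarks] at hdown
  refine ⟨?_, hup⟩
  rw [← (valleyFlip l).count_true_add_count_false, hup, hdown]
  ring

lemma flaws_valleyFlip (hl : IsDyck n l) : flaws (valleyFlip l) = n - flaws l := by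
  rw [flaws_eq_flawsOfMarks, upMarks_valleyFlip hl, downMarks_valleyFlip hl,
    flawsOfMarks_map_not (by rw [hl.length_upMarks, hl.length_downMarks]; omega),
    hl.length_upMarks, flaws_eq_flawsOfMarks]

lemma valleys_valleyFlip (hl : IsDyck n l) : valleys (valleyFlip l) = n - valleys l := by
  have := (downMarks l).count_true_add_count_false
  rw [hl.length_downMarks, count_downMarks] at this
  rw [← count_downMarks, downMarks_valleyFlip hl, count_map_not]
  omega

end ValleyFlip

theorem valley_reciprocity_general (n m k : ℕ) (hm : m ≤ n) (hk : k ≤ n) :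
    v n m k = v n (n - m) (n - k) :=
  Nat.card_congr
    { toFun := fun l => ⟨valleyFlip l, isDyck_valleyFlip l.2.1,
        by rw [flaws_valleyFlip l.2.1, l.2.2.1], by rw [valleys_valleyFlip l.2.1, l.2.2.2]⟩
      invFun := fun l => ⟨valleyFlip l, isDyck_valleyFlip l.2.1,
        by rw [flaws_valleyFlip l.2.1, l.2.2.1]; omega,
        by rw [valleys_valleyFlip l.2.1, l.2.2.2]; omega⟩
      left_inv := fun l => Subtype.ext (valleyFlip_valleyFlip l.2.1)
      right_inv := fun l => Subtype.ext (valleyFlip_valleyFlip l.2.1) }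

/-- The reciprocity theorem for valleys: `v n m k = v n (n-m) (n-k)`. -/
theorem valley_reciprocity (n m k : ℕ) (hn : 1 ≤ n) (hm : m ≤ n) (hk : k ≤ n) :
    v n m k = v n (n - m) (n - k) :=
  valley_reciprocity_general n m k hm hk
end

section
/- Let n ≥ 1, let 0 ≤ k ≤ n−1, and let 0 ≤ m ≤ n. Then (k+1)·a_{n,m,k} = C(n−1,k)·C(n,k), where C(a,b) denotes the binomial coefficient; that is, the number of Dyck paths of semilength n with exactly m flaws and exactly k double ascents equals the Narayana number (1/(k+1))·C(n−1,k)·C(n,k), independently of m. -/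
/-!
Append a down step to a path `w` with `n` up and `n` down steps: the walk `v = w ++ [D]` ends at
height `-1` and has `n + 1` down steps. Cutting `v` open just after one of its down steps and
rotating gives a path `w'` with `w' ++ [D]` a rotation of `v`. Since a closed walk has as many up
steps as down steps below the axis, the flaws of `w'` are the down steps of `v` that precede the
cut one in the order (starting height, position); so the `n + 1` cuts realise each flaw count
`0, …, n` exactly once. Both `v` and its rotations end with a down step, so rotating creates or
destroys no double ascent. Hence `a n m k` does not depend on `m`, and `(n + 1) * a n m k` counts
all words with `n` up steps, `n` down steps and `k` double ascents, which a first-step recursion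
evaluates to `C(n-1, k) * C(n+1, k+1)`.
-/

open Finset

theorem Finset.card_filter_range_add (p : ℕ → Prop) [DecidablePred p] (a b : ℕ) :
    #{i ∈ range (a + b) | p i} = #{i ∈ range a | p i} + #{i ∈ range b | p (a + i)} := by
  simp only [card_filter, sum_range_add]

theorem Finset.existsUnique_card_filter_lt_eq {α β : Type*} [LinearOrder β] {s : Finset α}
    {f : α → β} (hf : Set.InjOn f s) {m : ℕ} (hm : m < #s) :
    ∃! x, x ∈ s ∧ #{y ∈ s | f y < f x} = m := by
  set r : α → ℕ := fun x => #{y ∈ s | f y < f x}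
  have r_lt : ∀ x ∈ s, r x < #s := fun x hx =>
    card_lt_card (filter_ssubset.2 ⟨x, hx, lt_irrefl _⟩)
  have r_strictMono : ∀ x ∈ s, ∀ x' ∈ s, f x < f x' → r x < r x' := by
    intro x hx x' hx' hlt
    refine card_lt_card ((ssubset_iff_of_subset fun y hy => ?_).2 ⟨x, ?_, ?_⟩)
    · simp only [mem_filter] at hy ⊢
      exact ⟨hy.1, hy.2.trans hlt⟩
    · simp [hx, hlt]
    · simp
  have r_injOn : Set.InjOn r s := by
    intro x hx x' hx' hr
    by_contra hne
    rcases lt_or_gt_of_ne (hf.ne hx hx' hne) with h | h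
    · exact (r_strictMono x hx x' hx' h).ne hr
    · exact (r_strictMono x' hx' x hx h).ne' hr
  have image_r : s.image r = range #s :=
    eq_of_subset_of_card_le (image_subset_iff.2 fun x hx => mem_range.2 (r_lt x hx))
      (by rw [card_range, card_image_of_injOn r_injOn])
  obtain ⟨x, hx, rfl⟩ := mem_image.1 (image_r ▸ mem_range.2 hm)
  exact ⟨x, ⟨hx, rfl⟩, fun x' ⟨hx', hr⟩ => r_injOn hx' hx hr⟩

theorem height_append (x y : List Bool) : height (x ++ y) = height x + height y := by
  simp only [height, List.count_append]; push_cast; ring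

@[simp] theorem height_nil : height [] = 0 := rfl
@[simp] theorem height_singleton_true : height [true] = 1 := rfl
@[simp] theorem height_singleton_false : height [false] = -1 := rfl

def stepCount (R : Bool → ℤ → Prop) [DecidableRel R] (h : ℤ) (l : List Bool) : ℕ :=
  #{i ∈ range l.length | R (l.getD i false) (h + height (l.take i))}

section stepCount

variable (R : Bool → ℤ → Prop) [DecidableRel R]

theorem stepCount_append (h : ℤ) (x y : List Bool) :
    stepCount R h (x ++ y) = stepCount R h x + stepCount R (h + height x) y := by
  rw [stepCount, List.length_append, card_filter_range_add, stepCount, stepCount]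
  congr 1
  · refine congrArg card (filter_congr fun i hi => ?_)
    rw [mem_range] at hi
    rw [List.getD_append _ _ _ _ hi, List.take_append_of_le_length hi.le]
  · refine congrArg card (filter_congr fun i _ => ?_)
    rw [List.getD_append_right _ _ _ _ (Nat.le_add_right _ _), Nat.add_sub_cancel_left,
      List.take_length_add_append, height_append, add_assoc]

theorem stepCount_singleton (h : ℤ) (b : Bool) :
    stepCount R h [b] = if R b h then 1 else 0 := by
  simp [stepCount, range_one, filter_singleton, apply_ite]

theorem stepCount_mono {R' : Bool → ℤ → Prop} [DecidableRel R']
    (hR : ∀ b y, R b y → R' b y) (h : ℤ) (l : List Bool) :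
    stepCount R h l ≤ stepCount R' h l :=
  card_le_card (monotone_filter_right _ fun _ _ hi => hR _ _ hi)

end stepCount

theorem stepCount_eq_count (a : Bool) (h : ℤ) (l : List Bool) :
    stepCount (fun b _ => b = a) h l = l.count a := by
  induction l using List.reverseRecOn with
  | nil => rfl
  | append_singleton l b ih =>
    rw [stepCount_append, stepCount_singleton, ih, List.count_append, List.count_singleton]
    simp [beq_iff_eq]

-- A down step starting at height `y ≤ 0` ends below the axis: both predicates select the steps
-- lying below the x-axis.
abbrev IsLowUp (b : Bool) (y : ℤ) : Prop := b = true ∧ y < 0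

abbrev IsLowDown (b : Bool) (y : ℤ) : Prop := b = false ∧ y ≤ 0

theorem flaws_eq_stepCount (l : List Bool) : flaws l = stepCount IsLowUp 0 l := by
  simp only [flaws, stepCount, zero_add]

-- `max (-y) 0` counts the unit levels between height `y` and the axis; a step below the axis
-- crosses exactly one of them, upwards or downwards.
theorem stepCount_lowUp_add (h : ℤ) (l : List Bool) :
    (stepCount IsLowUp h l : ℤ) + max (-(h + height l)) 0 =
      stepCount IsLowDown h l + max (-h) 0 := by
  induction l using List.reverseRecOn with
  | nil => simp [stepCount]
  | append_singleton l b ih =>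
    rw [stepCount_append, stepCount_append, stepCount_singleton, stepCount_singleton,
      height_append]
    cases b <;> grind [height_singleton_false, height_singleton_true]

def downSteps (v : List Bool) : Finset ℕ := {i ∈ range v.length | v.getD i false = false}

theorem card_downSteps (v : List Bool) : #(downSteps v) = v.count false :=
  stepCount_eq_count false 0 v

def stepKey (v : List Bool) (i : ℕ) : ℤ ×ₗ ℕ := toLex (height (v.take i), i)

theorem stepKey_injective (v : List Bool) : Function.Injective (stepKey v) :=
  fun _ _ h => congrArg (fun x => (ofLex x).2) h

def downRank (v : List Bool) (q : ℕ) : ℕ := #{i ∈ downSteps v | stepKey v i < stepKey v q}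

theorem flaws_eq_stepCount_lowDown {l : List Bool} (hl : height l = 0) :
    flaws l = stepCount IsLowDown 0 l := by
  have := stepCount_lowUp_add 0 l
  rw [hl] at this
  rw [flaws_eq_stepCount]
  simpa using this

theorem flaws_eq_downRank (P S : List Bool) (hv : height (P ++ false :: S) = -1) :
    flaws (S ++ P) = downRank (P ++ false :: S) P.length := by
  have hS : height S = -height P := by
    rw [show P ++ false :: S = P ++ [false] ++ S by simp, height_append, height_append,
      height_singleton_false] at hv
    omega
  have hkey : stepKey (P ++ false :: S) P.length = toLex (height P, P.length) := by
    simp [stepKey]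
  rw [flaws_eq_stepCount_lowDown (by rw [height_append, hS]; ring), stepCount_append, zero_add,
    hS, downRank, downSteps, filter_filter, hkey, List.length_append, List.length_cons,
    show P.length + (S.length + 1) = P.length + 1 + S.length by ring, card_filter_range_add,
    range_add_one, filter_insert, if_neg (by rw [hkey]; exact fun h => lt_irrefl _ h.2), add_comm]
  congr 1
  · refine congrArg card (filter_congr fun i hi => ?_)
    rw [mem_range] at hi
    rw [stepKey, List.getD_append _ _ _ _ hi, List.take_append_of_le_length hi.le,
      Prod.Lex.toLex_lt_toLex]
    simp only [IsLowDown]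
    exact and_congr_right fun _ => by omega
  · refine congrArg card (filter_congr fun i _ => ?_)
    rw [show P.length + 1 + i = P.length + (i + 1) by ring, stepKey,
      List.getD_append_right _ _ _ _ (Nat.le_add_right _ _), Nat.add_sub_cancel_left,
      List.getD_cons_succ, List.take_length_add_append, List.take_succ_cons, height_append,
      Prod.Lex.toLex_lt_toLex, show false :: S.take i = [false] ++ S.take i from rfl,
      height_append]
    simp only [IsLowDown, height_singleton_false]
    exact and_congr_right fun _ => by omega

theorem mem_downSteps_length (P S : List Bool) : P.length ∈ downSteps (P ++ false :: S) := by
  simp [downSteps]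

theorem exists_split_of_mem_downSteps {v : List Bool} {q : ℕ} (hq : q ∈ downSteps v) :
    ∃ P S, v = P ++ false :: S ∧ P.length = q := by
  simp only [downSteps, mem_filter, mem_range] at hq
  refine ⟨v.take q, v.drop (q + 1), ?_, by simp [hq.1.le]⟩
  conv_lhs => rw [← List.take_append_drop q v, List.drop_eq_getElem_cons hq.1]
  rw [← List.getD_eq_getElem v false hq.1, hq.2]

theorem append_false_cons_isRotated (P S : List Bool) : P ++ false :: S ~r S ++ P ++ [false] := by
  simpa using List.isRotated_append (l := P ++ [false]) (l' := S)

theorem List.exists_append_of_isRotated {α : Type*} {l l' : List α} (h : l ~r l') :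
    ∃ u t, l = u ++ t ∧ l' = t ++ u := by
  obtain ⟨n, hn, rfl⟩ := List.isRotated_iff_mod.1 h
  exact ⟨l.take n, l.drop n, (List.take_append_drop n l).symm,
    List.rotate_eq_drop_append_take hn⟩

theorem exists_split_of_isRotated {v y : List Bool} (h : v ~r y ++ [false]) :
    ∃ P S, v = P ++ false :: S ∧ y = S ++ P := by
  obtain ⟨u, t, rfl, hrot⟩ := List.exists_append_of_isRotated h
  rcases List.eq_nil_or_concat u with rfl | ⟨P, b, rfl⟩
  · exact ⟨y, [], by simp [hrot], rfl⟩
  · rw [List.concat_eq_append, ← List.append_assoc] at hrot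
    obtain ⟨hy, hb⟩ := List.append_inj' hrot rfl
    simp only [List.cons.injEq, and_true] at hb
    exact ⟨P, t, by simp [hb], hy⟩

theorem existsUnique_isRotated_flaws_eq {v : List Bool} (hv : height v = -1) {m : ℕ}
    (hm : m < v.count false) : ∃! y, v ~r y ++ [false] ∧ flaws y = m := by
  rw [← card_downSteps] at hm
  obtain ⟨q, ⟨hq, hrank⟩, huniq⟩ :=
    existsUnique_card_filter_lt_eq (stepKey_injective v).injOn hm
  obtain ⟨P, S, rfl, rfl⟩ := exists_split_of_mem_downSteps hq
  refine ⟨S ++ P, ⟨append_false_cons_isRotated P S, (flaws_eq_downRank P S hv).trans hrank⟩,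
    ?_⟩
  rintro y ⟨hy, hfy⟩
  obtain ⟨P', S', hsplit, rfl⟩ := exists_split_of_isRotated hy
  rw [hsplit] at hv huniq
  have hlen : P'.length = P.length :=
    huniq _ ⟨mem_downSteps_length P' S', (flaws_eq_downRank P' S' hv).symm.trans hfy⟩
  obtain ⟨rfl, hS⟩ := List.append_inj hsplit hlen.symm
  rw [(List.cons.inj hS).2]

@[simp] theorem dascents_nil : dascents [] = 0 := by simp [dascents]

theorem dascents_cons (a : Bool) (t : List Bool) :
    dascents (a :: t) = (if a = true ∧ t.head? = some true then 1 else 0) + dascents t := by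
  cases t with
  | nil => simp [dascents]
  | cons c t =>
    simp only [dascents, card_filter, List.length_cons, Nat.add_sub_cancel,
      sum_range_succ' _ t.length, List.getD_cons_succ, List.getD_cons_zero, List.head?_cons,
      Option.some.injEq]
    ring

theorem dascents_cons_cons (a b : Bool) (t : List Bool) :
    dascents (a :: b :: t) = (a && b).toNat + dascents (b :: t) := by
  rw [dascents_cons]
  cases a <;> cases b <;> rfl

theorem dascents_append (u t : List Bool) :
    dascents (u ++ t) = dascents u + dascents t +
      if u.getLast? = some true ∧ t.head? = some true then 1 else 0 := by
  induction u with
  | nil => simp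
  | cons a u ih =>
    cases u with
    | nil => simp [dascents_cons, add_comm]
    | cons c u =>
      rw [List.cons_append, dascents_cons a (c :: u ++ t), ih, dascents_cons a (c :: u)]
      simp only [List.cons_append, List.head?_cons, List.getLast?_cons_cons, Option.some.injEq]
      ring

theorem dascents_append_false (w : List Bool) : dascents (w ++ [false]) = dascents w := by
  simp [dascents_append, dascents_cons]

theorem dascents_append_comm {u t : List Bool} (hu : u.getLast? ≠ some true)
    (ht : t.getLast? ≠ some true) : dascents (u ++ t) = dascents (t ++ u) := by
  rw [dascents_append, dascents_append, if_neg (fun h => hu h.1), if_neg (fun h => ht h.1),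
    add_comm (dascents u)]

theorem getLast?_ne_some_true_of_append {u t : List Bool} (h : (u ++ t).getLast? = some false) :
    t.getLast? ≠ some true := by
  intro ht
  simp [List.getLast?_append, ht] at h

theorem dascents_eq_of_isRotated {w y : List Bool} (h : w ++ [false] ~r y ++ [false]) :
    dascents y = dascents w := by
  obtain ⟨u, t, hw, hy⟩ := List.exists_append_of_isRotated h
  rw [← dascents_append_false y, hy, ← dascents_append_false w, hw]
  exact (dascents_append_comm (getLast?_ne_some_true_of_append (by rw [← hy]; simp))
    (getLast?_ne_some_true_of_append (by rw [← hw]; simp))).symm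

theorem Nat.card_eq_of_existsUnique {α : Type*} {P Q : α → Prop} {R : α → α → Prop}
    (hR : ∀ x y, R x y → R y x) (hPQ : ∀ x, P x → ∃! y, R x y ∧ Q y)
    (hQP : ∀ y, Q y → ∃! x, R y x ∧ P x) :
    Nat.card {x // P x} = Nat.card {y // Q y} := by
  refine Nat.card_congr
    { toFun := fun x => ⟨(hPQ x.1 x.2).exists.choose, (hPQ x.1 x.2).exists.choose_spec.2⟩
      invFun := fun y => ⟨(hQP y.1 y.2).exists.choose, (hQP y.1 y.2).exists.choose_spec.2⟩
      left_inv := fun ⟨x, hx⟩ => ?_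
      right_inv := fun ⟨y, hy⟩ => ?_ }
  · obtain ⟨hxy, hy⟩ := (hPQ x hx).exists.choose_spec
    exact Subtype.ext ((hQP _ hy).unique (hQP _ hy).exists.choose_spec ⟨hR _ _ hxy, hx⟩)
  · obtain ⟨hyx, hx⟩ := (hQP y hy).exists.choose_spec
    exact Subtype.ext ((hPQ _ hx).unique (hPQ _ hx).exists.choose_spec ⟨hR _ _ hyx, hy⟩)

theorem isDyck_iff_count (n : ℕ) (l : List Bool) :
    IsDyck n l ↔ l.count true = n ∧ l.count false = n := by
  have := List.count_true_add_count_false l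
  unfold IsDyck
  omega

theorem isDyck_iff_of_isRotated {n : ℕ} {w y : List Bool} (h : w ++ [false] ~r y ++ [false]) :
    IsDyck n y ↔ IsDyck n w := by
  have hc := h.perm.count_eq
  simp only [List.count_append] at hc
  rw [isDyck_iff_count, isDyck_iff_count, Nat.add_right_cancel (hc true),
    Nat.add_right_cancel (hc false)]

theorem flaws_le_count (l : List Bool) : flaws l ≤ l.count true := by
  rw [flaws_eq_stepCount, ← stepCount_eq_count true 0 l]
  exact stepCount_mono _ (fun _ _ h => h.1) 0 l

theorem existsUnique_isRotated_isDyck {n m m' k : ℕ} {w : List Bool}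
    (hw : IsDyck n w ∧ flaws w = m ∧ dascents w = k) (hm' : m' ≤ n) :
    ∃! y, w ++ [false] ~r y ++ [false] ∧ IsDyck n y ∧ flaws y = m' ∧ dascents y = k := by
  obtain ⟨hT, hF⟩ := (isDyck_iff_count n w).1 hw.1
  have hv : height (w ++ [false]) = -1 := by simp [height, hT, hF]
  obtain ⟨y, ⟨hy, hfy⟩, huniq⟩ :=
    existsUnique_isRotated_flaws_eq hv (m := m')
      (by rw [List.count_append, List.count_singleton_self, hF]; omega)
  exact ⟨y, ⟨hy, (isDyck_iff_of_isRotated hy).2 hw.1, hfy,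
    (dascents_eq_of_isRotated hy).trans hw.2.2⟩, fun y' hy' => huniq y' ⟨hy'.1, hy'.2.2.1⟩⟩

theorem a_eq_a_of_le {n m m' k : ℕ} (hm : m ≤ n) (hm' : m' ≤ n) : a n m k = a n m' k :=
  Nat.card_eq_of_existsUnique (R := fun x y => x ++ [false] ~r y ++ [false])
    (fun _ _ h => h.symm) (fun _ hw => existsUnique_isRotated_isDyck hw hm')
    (fun _ hw => existsUnique_isRotated_isDyck hw hm)

theorem card_isDyck_dascents_eq_mul_a {n m k : ℕ} (hm : m ≤ n) :
    Nat.card {w // IsDyck n w ∧ dascents w = k} = (n + 1) * a n m k := by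
  have hfin : {w | IsDyck n w ∧ dascents w = k}.Finite :=
    (List.finite_length_eq Bool (2 * n)).subset fun w hw => hw.1.1
  rw [Nat.subtype_card (p := fun w => IsDyck n w ∧ dascents w = k) hfin.toFinset
      fun w => hfin.mem_toFinset,
    card_eq_sum_card_fiberwise (f := flaws) (t := range (n + 1)) fun w hw => ?_]
  · rw [sum_congr rfl fun m' hm' => ?_, sum_const, card_range, smul_eq_mul]
    rw [a_eq_a_of_le hm (Nat.lt_succ_iff.1 (mem_range.1 hm'))]
    refine (Nat.subtype_card _ fun w => ?_).symm
    simp only [mem_filter, Set.Finite.mem_toFinset, Set.mem_ofPred_eq]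
    tauto
  · rw [mem_coe, Set.Finite.mem_toFinset] at hw
    exact mem_coe.2 <| mem_range.2 <| Nat.lt_succ_of_le <|
      (flaws_le_count w).trans ((isDyck_iff_count n w).1 hw.1).1.le

theorem Nat.card_list_bool_eq_add {P : List Bool → Prop} [Finite {l // P l}] (hnil : ¬ P []) :
    Nat.card {l // P l} = Nat.card {t // P (true :: t)} + Nat.card {t // P (false :: t)} := by
  have (b : Bool) : Finite {t // P (b :: t)} :=
    Finite.of_injective (fun t => (⟨b :: t.1, t.2⟩ : {l // P l}))
      fun _ _ h => Subtype.ext (List.cons_injective (congrArg Subtype.val h))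
  rw [← Nat.card_sum]
  exact Nat.card_congr
    { toFun := fun
        | ⟨[], h⟩ => (hnil h).elim
        | ⟨true :: t, h⟩ => .inl ⟨t, h⟩
        | ⟨false :: t, h⟩ => .inr ⟨t, h⟩
      invFun := Sum.elim (fun t => ⟨true :: t.1, t.2⟩) (fun t => ⟨false :: t.1, t.2⟩)
      left_inv := by rintro ⟨_ | ⟨_ | _, t⟩, h⟩ <;> first | rfl | exact (hnil h).elim
      right_inv := by rintro (⟨t, h⟩ | ⟨t, h⟩) <;> rfl }

theorem Nat.card_subtype_and_const {α : Type*} (c : Prop) [Decidable c] (P : α → Prop) :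
    Nat.card {x // c ∧ P x} = if c then Nat.card {x // P x} else 0 := by
  split_ifs with h
  · exact Nat.card_congr (Equiv.subtypeEquivRight fun x => and_iff_right h)
  · simp [h]

def IsWordAfter (b : Bool) (p q j : ℕ) (t : List Bool) : Prop :=
  t.count true = p ∧ t.count false = q ∧ dascents (b :: t) = j

noncomputable def numWordsAfter (b : Bool) (p q j : ℕ) : ℕ :=
  Nat.card {t // IsWordAfter b p q j t}

instance (b : Bool) (p q j : ℕ) : Finite {t // IsWordAfter b p q j t} :=
  ((List.finite_length_eq Bool (p + q)).subset fun t ht => by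
    rw [Set.mem_ofPred_eq, ← List.count_true_add_count_false, ht.1, ht.2.1]).to_subtype

theorem isWordAfter_true_cons {b : Bool} {p q j : ℕ} {t : List Bool} :
    IsWordAfter b p q j (true :: t) ↔
      (p ≠ 0 ∧ b.toNat ≤ j) ∧ IsWordAfter true (p - 1) q (j - b.toNat) t := by
  simp only [IsWordAfter, List.count_cons_self, List.count_cons_of_ne, dascents_cons_cons,
    Bool.and_true, ne_eq, Bool.true_eq_false, not_false_eq_true]
  omega

theorem isWordAfter_false_cons {b : Bool} {p q j : ℕ} {t : List Bool} :
    IsWordAfter b p q j (false :: t) ↔ q ≠ 0 ∧ IsWordAfter false p (q - 1) j t := by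
  simp only [IsWordAfter, List.count_cons_self, List.count_cons_of_ne, dascents_cons_cons,
    Bool.and_false, Bool.toNat_false, ne_eq, Bool.false_eq_true, not_false_eq_true]
  omega

theorem numWordsAfter_zero_zero (b : Bool) (j : ℕ) :
    numWordsAfter b 0 0 j = if j = 0 then 1 else 0 := by
  have h (t : List Bool) : IsWordAfter b 0 0 j t ↔ j = 0 ∧ t = [] := by
    rcases t with _ | ⟨_ | _, t⟩ <;> simp [IsWordAfter, dascents_cons, eq_comm]
  rw [numWordsAfter, Nat.card_congr (Equiv.subtypeEquivRight h), Nat.card_subtype_and_const]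
  simp

theorem numWordsAfter_eq_add (b : Bool) (p q j : ℕ) (hpq : p + q ≠ 0) :
    numWordsAfter b p q j =
      (if p ≠ 0 ∧ b.toNat ≤ j then numWordsAfter true (p - 1) q (j - b.toNat) else 0) +
      (if q ≠ 0 then numWordsAfter false p (q - 1) j else 0) := by
  rw [numWordsAfter, Nat.card_list_bool_eq_add, Nat.card_congr (Equiv.subtypeEquivRight fun _ =>
    isWordAfter_true_cons), Nat.card_congr (Equiv.subtypeEquivRight fun _ =>
    isWordAfter_false_cons), Nat.card_subtype_and_const, Nat.card_subtype_and_const]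
  · rfl
  · intro h
    simp only [IsWordAfter, List.count_nil] at h
    omega

theorem Nat.choose_mul_choose_zero_succ_sub (p j : ℕ) :
    p.choose j * choose 0 (p + 1 - j) = 0 := by
  rcases Nat.lt_or_ge p j with h | h
  · rw [Nat.choose_eq_zero_of_lt h, zero_mul]
  · rw [Nat.succ_sub h, Nat.choose_zero_succ, mul_zero]

theorem Nat.choose_mul_choose_succ_succ_sub (p q j : ℕ) :
    p.choose j * (q + 1).choose (p + 1 - j) =
      p.choose j * q.choose (p - j) + p.choose j * q.choose (p + 1 - j) := by
  rcases Nat.lt_or_ge p j with h | h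
  · simp [Nat.choose_eq_zero_of_lt h]
  · rw [Nat.succ_sub h, Nat.choose_succ_succ', mul_add]

theorem numWordsAfter_eq_choose (p q j : ℕ) :
    numWordsAfter true p q j = p.choose j * q.choose (p - j) ∧
      numWordsAfter false p q j = (p - 1).choose j * (q + 1).choose (p - j) := by
  induction p generalizing q j with
  | zero =>
    induction q generalizing j with
    | zero => cases j <;> simp [numWordsAfter_zero_zero]
    | succ q ih =>
      rw [numWordsAfter_eq_add true 0 (q + 1) j (by omega),
        numWordsAfter_eq_add false 0 (q + 1) j (by omega)]
      simp [(ih j).2]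
  | succ p ihp =>
    induction q generalizing j with
    | zero =>
      rw [numWordsAfter_eq_add true (p + 1) 0 j (by omega),
        numWordsAfter_eq_add false (p + 1) 0 j (by omega)]
      refine ⟨?_, ?_⟩
      · rcases j with _ | j
        · simp
        · have := Nat.choose_mul_choose_zero_succ_sub p (j + 1)
          simp only [Nat.add_sub_add_right] at this
          simp [(ihp _ _).1, Nat.choose_succ_succ', add_mul, this]
      · have := Nat.choose_mul_choose_succ_succ_sub p 0 j
        rw [Nat.choose_mul_choose_zero_succ_sub, add_zero] at this
        simp [(ihp _ _).1, this]
    | succ q ihq =>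
      rw [numWordsAfter_eq_add true (p + 1) (q + 1) j (by omega),
        numWordsAfter_eq_add false (p + 1) (q + 1) j (by omega)]
      refine ⟨?_, ?_⟩
      · rcases j with _ | j
        · simp [(ihq _).2]
        · simp [(ihp _ _).1, (ihq _).2, Nat.choose_succ_succ', add_mul]
      · simp [(ihp _ _).1, (ihq _).2, Nat.choose_mul_choose_succ_succ_sub p (q + 1) j]

theorem card_isDyck_dascents_eq_choose (n k : ℕ) :
    Nat.card {w // IsDyck n w ∧ dascents w = k} = (n - 1).choose k * (n + 1).choose (k + 1) := by
  have hw : Nat.card {w // IsDyck n w ∧ dascents w = k} = numWordsAfter false n n k :=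
    Nat.card_congr <| Equiv.subtypeEquivRight fun w => by
      rw [isDyck_iff_count, IsWordAfter, dascents_cons]
      simp [and_assoc]
  rw [hw, (numWordsAfter_eq_choose n n k).2]
  rcases le_or_gt k n with h | h
  · rw [Nat.choose_symm_of_eq_add (by omega : n + 1 = n - k + (k + 1))]
  · rw [Nat.choose_eq_zero_of_lt (by omega : n - 1 < k), zero_mul, zero_mul]

theorem dascent_chung_feller_general (n m k : ℕ) (hm : m ≤ n) :
    (k + 1) * a n m k = Nat.choose (n - 1) k * Nat.choose n k := by
  have h : (n + 1) * a n m k = (n - 1).choose k * (n + 1).choose (k + 1) :=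
    (card_isDyck_dascents_eq_mul_a hm).symm.trans (card_isDyck_dascents_eq_choose n k)
  apply Nat.eq_of_mul_eq_mul_left n.succ_pos
  calc (n + 1) * ((k + 1) * a n m k) = (k + 1) * ((n + 1) * a n m k) := by ring
    _ = (n - 1).choose k * ((n + 1).choose (k + 1) * (k + 1)) := by rw [h]; ring
    _ = (n + 1) * ((n - 1).choose k * n.choose k) := by rw [← Nat.add_one_mul_choose_eq]; ring

/-- Chung-Feller theorem for double ascents: `(k+1) a_{n,m,k} = C(n-1,k) C(n,k)`,
i.e. `a_{n,m,k}` is the Narayana number, independently of `m`. -/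
theorem dascent_chung_feller (n m k : ℕ) (hn : 1 ≤ n) (hk : k ≤ n - 1) (hm : m ≤ n) :
    (k + 1) * a n m k = Nat.choose (n - 1) k * Nat.choose n k :=
  dascent_chung_feller_general n m k hm
end

section
/- For every n ≥ 0, every m with 0 ≤ m ≤ n, and every k ≥ 0, the number of Dyck paths of semilength n with exactly m flaws and exactly k double ascents equals the number of Dyck paths of semilength n with exactly m flaws and exactly k double descents; that is, a_{n,m,k} = d_{n,m,k}. (The bijection reverses the path and replaces each step by its opposite.) -/
namespace RCAux

def rc (l : List Bool) : List Bool := (l.map not).reverse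

lemma rc_rc (l : List Bool) : rc (rc l) = l := by
  simp only [rc, List.map_reverse, List.reverse_reverse, List.map_map]
  simp [Function.comp_def]

lemma length_rc (l : List Bool) : (rc l).length = l.length := by simp [rc]

lemma not_inj : Function.Injective not := by
  intro a b h; cases a <;> cases b <;> simp_all

lemma count_true_map_not (l : List Bool) : (l.map not).count true = l.count false := by
  simpa using List.count_map_of_injective l not not_inj false

lemma count_false_map_not (l : List Bool) : (l.map not).count false = l.count true := by
  simpa using List.count_map_of_injective l not not_inj true

lemma count_true_rc (l : List Bool) : (rc l).count true = l.count false := by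
  simp [rc, List.count_reverse, count_true_map_not]

lemma count_false_add_count_true (l : List Bool) : l.count false + l.count true = l.length := by
  induction l with
  | nil => simp
  | cons b t ih => cases b <;> simp [List.count_cons, *] <;> omega

lemma height_nil : height [] = 0 := by simp [height]

lemma height_cons (b : Bool) (t : List Bool) :
    height (b :: t) = (if b then 1 else -1) + height t := by
  cases b <;> simp [height, List.count_cons] <;> ring

lemma height_reverse (l : List Bool) : height l.reverse = height l := by
  simp [height, List.count_reverse]

lemma height_map_not (l : List Bool) : height (l.map not) = - height l := by
  simp [height, count_true_map_not, count_false_map_not]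

lemma height_append (a b : List Bool) : height (a ++ b) = height a + height b := by
  simp [height, List.count_append]; ring

lemma height_drop (l : List Bool) (n : ℕ) :
    height (l.drop n) = height l - height (l.take n) := by
  have := height_append (l.take n) (l.drop n)
  rw [List.take_append_drop] at this; omega

lemma height_take_rc (l : List Bool) {j : ℕ} :
    height ((rc l).take j) = height (l.take (l.length - j)) - height l := by
  rw [rc, List.take_reverse, height_reverse, List.length_map, ← List.map_drop,
    height_map_not, height_drop]
  ring

lemma getD_rc (l : List Bool) {i : ℕ} (hi : i < l.length) :
    (rc l).getD i false = !(l.getD (l.length - 1 - i) false) := by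
  have h1 : i < (rc l).length := by rwa [length_rc]
  have h2 : l.length - 1 - i < l.length := by omega
  rw [List.getD_eq_getElem _ _ h1, List.getD_eq_getElem _ _ h2]
  simp only [rc]
  rw [List.getElem_reverse, List.getElem_map]
  congr 1
  simp

/-- the surplus function -/
def M (h : ℤ) : ℤ := if h < 0 then -h else 0

lemma key (l : List Bool) : ∀ h : ℤ,
    ((∑ i ∈ Finset.range l.length,
        if l.getD i false = false ∧ h + height (l.take (i+1)) < 0 then (1:ℤ) else 0)
      - ∑ i ∈ Finset.range l.length,
        if l.getD i false = true ∧ h + height (l.take i) < 0 then (1:ℤ) else 0)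
    = M (h + height l) - M h := by
  induction l with
  | nil => intro h; simp [height_nil]
  | cons b t ih =>
    intro h
    have lc : (b :: t).length = t.length + 1 := rfl
    rw [lc, Finset.sum_range_succ', Finset.sum_range_succ']
    simp only [List.getD_cons_succ, List.getD_cons_zero, List.take_succ_cons, List.take_zero,
      height_cons, height_nil, ← add_assoc]
    have ih' := ih (h + (if b then 1 else -1))
    cases b <;>
      simp only [if_true, if_false, Bool.false_eq_true, Bool.true_eq_false, false_and, and_true,
        true_and, if_neg (by simp : ¬ (true = false)), add_zero] at ih' ⊢ <;>
      · rw [M, M] at *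
        split_ifs at ih' ⊢ <;> omega


lemma flaws_rc (l : List Bool) (hl : height l = 0) : flaws (rc l) = flaws l := by
  have h1 : (flaws (rc l) : ℤ) =
      ∑ i ∈ Finset.range l.length,
        if l.getD i false = false ∧ height (l.take (i+1)) < 0 then (1:ℤ) else 0 := by
    rw [flaws, Finset.card_filter, length_rc]
    push_cast
    rw [← Finset.sum_range_reflect
      (fun i => if l.getD i false = false ∧ height (l.take (i+1)) < 0 then (1:ℤ) else 0)]
    refine Finset.sum_congr rfl ?_
    intro i hi
    have hi' : i < l.length := Finset.mem_range.mp hi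
    rw [getD_rc l hi', height_take_rc, hl]
    have : l.length - i = (l.length - 1 - i) + 1 := by omega
    rw [this]
    simp [Bool.not_eq_true']
  have h2 : (flaws l : ℤ) =
      ∑ i ∈ Finset.range l.length,
        if l.getD i false = true ∧ height (l.take i) < 0 then (1:ℤ) else 0 := by
    rw [flaws, Finset.card_filter]; push_cast; rfl
  have hk := key l 0
  simp only [zero_add, hl] at hk
  simp only [M, if_neg (by omega : ¬ (0:ℤ) < 0)] at hk
  have : (flaws (rc l) : ℤ) = (flaws l : ℤ) := by rw [h1, h2]; omega
  exact_mod_cast this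

lemma ddescents_rc (l : List Bool) : ddescents (rc l) = dascents l := by
  rw [ddescents, dascents, Finset.card_filter, Finset.card_filter, length_rc]
  rw [← Finset.sum_range_reflect
    (fun i => if l.getD i false = true ∧ l.getD (i+1) false = true then 1 else 0)]
  refine Finset.sum_congr rfl ?_
  intro i hi
  have hi' : i < l.length - 1 := Finset.mem_range.mp hi
  have h1 : i < l.length := by omega
  have h2 : i + 1 < l.length := by omega
  rw [getD_rc l h1, getD_rc l h2]
  have e1 : l.length - 1 - i = (l.length - 1 - 1 - i) + 1 := by omega
  have e2 : l.length - 1 - (i + 1) = l.length - 1 - 1 - i := by omega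
  rw [e1, e2]
  simp [Bool.not_eq_false', And.comm]

lemma isDyck_rc {n : ℕ} {l : List Bool} (h : IsDyck n l) : IsDyck n (rc l) := by
  have hc := count_false_add_count_true l
  refine ⟨by rw [length_rc, h.1], ?_⟩
  rw [count_true_rc]
  have := h.1; have := h.2; omega

lemma height_eq_zero {n : ℕ} {l : List Bool} (h : IsDyck n l) : height l = 0 := by
  have hc := count_false_add_count_true l
  have h1 := h.1; have h2 := h.2
  have : l.count false = n := by omega
  simp [height, h2, this]

end RCAux

/-- `a_{n,m,k} = d_{n,m,k}` (via the reverse-and-complement bijection). -/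
theorem dascent_ddescent (n m k : ℕ) (hm : m ≤ n) : a n m k = d n m k := by
  have fwd : ∀ l : List Bool, IsDyck n l ∧ flaws l = m ∧ dascents l = k →
      IsDyck n (RCAux.rc l) ∧ flaws (RCAux.rc l) = m ∧ ddescents (RCAux.rc l) = k := by
    rintro l ⟨hd, hf, hk⟩
    exact ⟨RCAux.isDyck_rc hd,
      by rw [RCAux.flaws_rc l (RCAux.height_eq_zero hd), hf],
      by rw [RCAux.ddescents_rc, hk]⟩
  have bwd : ∀ l : List Bool, IsDyck n l ∧ flaws l = m ∧ ddescents l = k →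
      IsDyck n (RCAux.rc l) ∧ flaws (RCAux.rc l) = m ∧ dascents (RCAux.rc l) = k := by
    rintro l ⟨hd, hf, hk⟩
    refine ⟨RCAux.isDyck_rc hd,
      by rw [RCAux.flaws_rc l (RCAux.height_eq_zero hd), hf], ?_⟩
    have := RCAux.ddescents_rc (RCAux.rc l)
    rw [RCAux.rc_rc] at this
    rw [← this, hk]
  exact Nat.card_congr
    { toFun := fun x => ⟨RCAux.rc x.1, fwd x.1 x.2⟩
      invFun := fun x => ⟨RCAux.rc x.1, bwd x.1 x.2⟩
      left_inv := fun x => Subtype.ext (RCAux.rc_rc x.1)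
      right_inv := fun x => Subtype.ext (RCAux.rc_rc x.1) }
end
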